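/- Let H_P = (ℤ × ℤ/2) ⋊ ℤ/2 (with ℤ/2 acting by inversion on ℤ), H_M = S₃ × ℤ/2, and H_E = ℤ/2 × ℤ/2, with embeddings of H_E into H_P and H_M sending the two generators to the images of a and c as in the presentations above. Then the amalgamated free product H_P ∗_{H_E} H_M has presentation ⟨a, b, c, d | a² = c² = d³ = (ac)² = adad⁻¹ = abab⁻¹ = 1, cbc = ab, d = cd²c⟩. -/

import Mathlib

/-!
The maps `H_P → G` and `H_M → G` sending each generator to the generator of the same name kill
all relators and agree on `H_E`, so they induce `H_P ∗_{H_E} H_M → G`. Conversely, every relator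
of `G` is a relator of `H_P` or of `H_M` written in the corresponding generators (for `adad⁻¹`
only after using `a² = 1`), and `a` and `c` have the same image from both factors, so
`a, b, c, d` define a homomorphism `G → H_P ∗_{H_E} H_M`. The two are inverse on generators.
-/

/-- Relators of `H_P = ⟨a,b,c | a² = c² = (ac)² = abab⁻¹ = 1, cbc = ab⟩`
(generators `0 = a`, `1 = b`, `2 = c`); `H_P ≅ (ℤ × ℤ/2) ⋊ ℤ/2`. -/
def relsHP : Set (FreeGroup (Fin 3)) :=
  { (FreeGroup.of 0) ^ 2,
    (FreeGroup.of 2) ^ 2,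
    (FreeGroup.of 0 * FreeGroup.of 2) ^ 2,
    FreeGroup.of 0 * FreeGroup.of 1 * FreeGroup.of 0 * (FreeGroup.of 1)⁻¹,
    (FreeGroup.of 2 * FreeGroup.of 1 * FreeGroup.of 2) * (FreeGroup.of 0 * FreeGroup.of 1)⁻¹ }

/-- Relators of `H_M = ⟨d,a,c | d³ = a² = c² = (ac)² = 1, ad = da, d = cd²c⟩`
(generators `0 = d`, `1 = a`, `2 = c`); `H_M ≅ S₃ × ℤ/2`. -/
def relsHM : Set (FreeGroup (Fin 3)) :=
  { (FreeGroup.of 0) ^ 3,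
    (FreeGroup.of 1) ^ 2,
    (FreeGroup.of 2) ^ 2,
    (FreeGroup.of 1 * FreeGroup.of 2) ^ 2,
    FreeGroup.of 1 * FreeGroup.of 0 * (FreeGroup.of 1)⁻¹ * (FreeGroup.of 0)⁻¹,
    (FreeGroup.of 0)⁻¹ * (FreeGroup.of 2 * (FreeGroup.of 0) ^ 2 * FreeGroup.of 2) }

/-- Relators of `H_E = ⟨a,c | a² = c² = (ac)² = 1⟩ ≅ ℤ/2 × ℤ/2`
(generators `0 = a`, `1 = c`). -/
def relsHE : Set (FreeGroup (Fin 2)) :=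
  { (FreeGroup.of 0) ^ 2,
    (FreeGroup.of 1) ^ 2,
    (FreeGroup.of 0 * FreeGroup.of 1) ^ 2 }

/-- Relators of `G = ⟨a,b,c,d | a² = c² = d³ = (ac)² = adad⁻¹ = abab⁻¹ = 1,
cbc = ab, d = cd²c⟩` (generators `0 = a`, `1 = b`, `2 = c`, `3 = d`). -/
def relsG : Set (FreeGroup (Fin 4)) :=
  { (FreeGroup.of 0) ^ 2,
    (FreeGroup.of 2) ^ 2,
    (FreeGroup.of 3) ^ 3,
    (FreeGroup.of 0 * FreeGroup.of 2) ^ 2,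
    FreeGroup.of 0 * FreeGroup.of 3 * FreeGroup.of 0 * (FreeGroup.of 3)⁻¹,
    FreeGroup.of 0 * FreeGroup.of 1 * FreeGroup.of 0 * (FreeGroup.of 1)⁻¹,
    (FreeGroup.of 2 * FreeGroup.of 1 * FreeGroup.of 2) * (FreeGroup.of 0 * FreeGroup.of 1)⁻¹,
    (FreeGroup.of 3)⁻¹ * (FreeGroup.of 2 * (FreeGroup.of 3) ^ 2 * FreeGroup.of 2) }

/-- The family of vertex groups, indexed by `Bool`: `true ↦ H_P`, `false ↦ H_M`. -/
def vertexGroup : Bool → Type :=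
  fun b => match b with
  | true => PresentedGroup relsHP
  | false => PresentedGroup relsHM

instance : ∀ b, Group (vertexGroup b) := fun b => by
  cases b <;> exact inferInstanceAs (Group (PresentedGroup _))

theorem commutator_eq_one_iff_of_sq_eq_one {G : Type*} [Group G] {a d : G} (ha : a ^ 2 = 1) :
    a * d * a⁻¹ * d⁻¹ = 1 ↔ a * d * a * d⁻¹ = 1 := by
  rw [inv_eq_of_mul_eq_one_right (by rwa [← sq] : a * a = 1)]

namespace PresentedGroup

variable {α β : Type*} {rels : Set (FreeGroup α)} {rels' : Set (FreeGroup β)}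

@[simp]
theorem mk_of (a : α) : mk rels (FreeGroup.of a) = of a :=
  rfl

theorem lift_map_eq_one {H : Type*} [Group H] {f : β → H} {σ : α → β}
    (ψ : PresentedGroup rels →* H) (hσ : ∀ a, f (σ a) = ψ (of a)) {r : FreeGroup α}
    (hr : r ∈ rels) : FreeGroup.lift f (FreeGroup.map σ r) = 1 := by
  have : (FreeGroup.lift f).comp (FreeGroup.map σ) = ψ.comp (mk rels) :=
    FreeGroup.ext_hom _ _ fun a => by simp [hσ]
  rw [← MonoidHom.comp_apply, this, MonoidHom.comp_apply, one_of_mem hr, map_one]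

def rename (σ : α → β) (h : ∀ r ∈ rels, mk rels' (FreeGroup.map σ r) = 1) :
    PresentedGroup rels →* PresentedGroup rels' :=
  toGroup (f := fun a => of (σ a)) fun r hr => by
    have : FreeGroup.lift (fun a => of (σ a)) = (mk rels').comp (FreeGroup.map σ) :=
      FreeGroup.ext_hom _ _ fun a => by simp
    rw [this, MonoidHom.comp_apply, h r hr]

@[simp]
theorem rename_of (σ : α → β) (h : ∀ r ∈ rels, mk rels' (FreeGroup.map σ r) = 1) (a : α) :
    rename σ h (of a) = of (σ a) :=
  toGroup.of _

end PresentedGroup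

open PresentedGroup Monoid

theorem relsHE_trivial_in_HP : ∀ r ∈ relsHE, mk relsHP (FreeGroup.map ![0, 2] r) = 1 := by
  intro r hr
  simp only [relsHE, Set.mem_insert_iff, Set.mem_singleton_iff] at hr
  rcases hr with rfl | rfl | rfl <;> exact one_of_mem (by simp [relsHP])

theorem relsHE_trivial_in_HM : ∀ r ∈ relsHE, mk relsHM (FreeGroup.map ![1, 2] r) = 1 := by
  intro r hr
  simp only [relsHE, Set.mem_insert_iff, Set.mem_singleton_iff] at hr
  rcases hr with rfl | rfl | rfl <;> exact one_of_mem (by simp [relsHM])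

theorem relsHP_trivial_in_G : ∀ r ∈ relsHP, mk relsG (FreeGroup.map ![0, 1, 2] r) = 1 := by
  intro r hr
  simp only [relsHP, Set.mem_insert_iff, Set.mem_singleton_iff] at hr
  rcases hr with rfl | rfl | rfl | rfl | rfl <;> exact one_of_mem (by simp [relsG])

theorem relsHM_trivial_in_G : ∀ r ∈ relsHM, mk relsG (FreeGroup.map ![3, 0, 2] r) = 1 := by
  intro r hr
  simp only [relsHM, Set.mem_insert_iff, Set.mem_singleton_iff] at hr
  rcases hr with rfl | rfl | rfl | rfl | rfl | rfl <;> try (apply one_of_mem; simp [relsG]; done)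
  -- `G` has the relator `adad⁻¹` rather than `ada⁻¹d⁻¹`; they agree since `a² = 1`.
  have ha : (of 0 : PresentedGroup relsG) ^ 2 = 1 := one_of_mem (by simp [relsG])
  have had : (of 0 : PresentedGroup relsG) * of 3 * of 0 * (of 3)⁻¹ = 1 :=
    one_of_mem (by simp [relsG])
  simpa [commutator_eq_one_iff_of_sq_eq_one ha] using had

def hEToHP : PresentedGroup relsHE →* PresentedGroup relsHP := rename _ relsHE_trivial_in_HP

def hEToHM : PresentedGroup relsHE →* PresentedGroup relsHM := rename _ relsHE_trivial_in_HM

def hPToG : PresentedGroup relsHP →* PresentedGroup relsG := rename _ relsHP_trivial_in_G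

def hMToG : PresentedGroup relsHM →* PresentedGroup relsG := rename _ relsHM_trivial_in_G

def edgeInclusion : ∀ b, PresentedGroup relsHE →* vertexGroup b
  | true => hEToHP
  | false => hEToHM

theorem edgeInclusion_true_of (i : Fin 2) :
    edgeInclusion true (of i) = (of (![0, 2] i) : PresentedGroup relsHP) :=
  rename_of _ relsHE_trivial_in_HP i

theorem edgeInclusion_false_of (i : Fin 2) :
    edgeInclusion false (of i) = (of (![1, 2] i) : PresentedGroup relsHM) :=
  rename_of _ relsHE_trivial_in_HM i

def vertexToG : ∀ b, vertexGroup b →* PresentedGroup relsG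
  | true => hPToG
  | false => hMToG

theorem hMToG_comp_hEToHM : hMToG.comp hEToHM = hPToG.comp hEToHP :=
  PresentedGroup.ext fun i => by fin_cases i <;> simp [hMToG, hEToHM, hPToG, hEToHP]

theorem vertexToG_comp_edgeInclusion :
    ∀ b, (vertexToG b).comp (edgeInclusion b) = hPToG.comp hEToHP
  | true => rfl
  | false => hMToG_comp_hEToHM

def pushoutToG : PushoutI edgeInclusion →* PresentedGroup relsG :=
  PushoutI.lift vertexToG _ vertexToG_comp_edgeInclusion

def pushoutGen : Fin 4 → PushoutI edgeInclusion :=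
  ![PushoutI.of true (of 0 : PresentedGroup relsHP),
    PushoutI.of true (of 1 : PresentedGroup relsHP),
    PushoutI.of true (of 2 : PresentedGroup relsHP),
    PushoutI.of false (of 0 : PresentedGroup relsHM)]

theorem of_edgeInclusion_true_eq (x : PresentedGroup relsHE) :
    PushoutI.of (φ := edgeInclusion) true (edgeInclusion true x) =
      PushoutI.of false (edgeInclusion false x) :=
  (PushoutI.of_apply_eq_base _ _ x).trans (PushoutI.of_apply_eq_base _ _ x).symm

theorem pushoutGen_hP (i : Fin 3) :
    pushoutGen (![0, 1, 2] i) = PushoutI.of true (of i : PresentedGroup relsHP) := by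
  fin_cases i <;> rfl

theorem pushoutGen_hM (i : Fin 3) :
    pushoutGen (![3, 0, 2] i) = PushoutI.of false (of i : PresentedGroup relsHM) := by
  fin_cases i
  · rfl
  · exact of_edgeInclusion_true_eq (of 0)
  · exact of_edgeInclusion_true_eq (of 1)

def gToPushout : PresentedGroup relsG →* PushoutI edgeInclusion :=
  toGroup (f := pushoutGen) fun r hr => by
    have hP : ∀ r ∈ FreeGroup.map ![0, 1, 2] '' relsHP, FreeGroup.lift pushoutGen r = 1 :=
      Set.forall_mem_image.2 fun _ =>
        lift_map_eq_one (PushoutI.of (φ := edgeInclusion) true) pushoutGen_hP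
    have hM : ∀ r ∈ FreeGroup.map ![3, 0, 2] '' relsHM, FreeGroup.lift pushoutGen r = 1 :=
      Set.forall_mem_image.2 fun _ =>
        lift_map_eq_one (PushoutI.of (φ := edgeInclusion) false) pushoutGen_hM
    simp only [relsG, Set.mem_insert_iff, Set.mem_singleton_iff] at hr
    rcases hr with rfl | rfl | rfl | rfl | rfl | rfl | rfl | rfl <;>
      try first | (apply hP; simp [relsHP]; done) | (apply hM; simp [relsHM]; done)
    -- `adad⁻¹` is the relator `ada⁻¹d⁻¹` of `H_M` up to `a² = 1`.
    have ha := hP (FreeGroup.of 0 ^ 2) (by simp [relsHP])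
    have had := hM (FreeGroup.of 0 * FreeGroup.of 3 * (FreeGroup.of 0)⁻¹ * (FreeGroup.of 3)⁻¹)
      (by simp [relsHM])
    simp only [map_mul, map_inv, map_pow, FreeGroup.lift_apply_of] at ha had ⊢
    exact (commutator_eq_one_iff_of_sq_eq_one ha).1 had

theorem gToPushout_of (i : Fin 4) : gToPushout (of i) = pushoutGen i :=
  toGroup.of _

theorem pushoutToG_of_true (x : PresentedGroup relsHP) :
    pushoutToG (PushoutI.of true x) = hPToG x :=
  PushoutI.lift_of vertexToG _ vertexToG_comp_edgeInclusion (i := true) x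

theorem pushoutToG_of_false (x : PresentedGroup relsHM) :
    pushoutToG (PushoutI.of false x) = hMToG x :=
  PushoutI.lift_of vertexToG _ vertexToG_comp_edgeInclusion (i := false) x

theorem pushoutToG_comp_gToPushout : pushoutToG.comp gToPushout = MonoidHom.id _ :=
  PresentedGroup.ext fun i => by
    fin_cases i <;>
      simp [gToPushout_of, pushoutGen, pushoutToG_of_true, pushoutToG_of_false, hPToG, hMToG]

theorem gToPushout_comp_pushoutToG : gToPushout.comp pushoutToG = MonoidHom.id _ := by
  refine PushoutI.hom_ext_nonempty fun b => ?_
  cases b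
  · refine PresentedGroup.ext fun i => ?_
    show gToPushout (pushoutToG (PushoutI.of false (of i))) = PushoutI.of false (of i)
    rw [pushoutToG_of_false, hMToG, rename_of, gToPushout_of, pushoutGen_hM]
  · refine PresentedGroup.ext fun i => ?_
    show gToPushout (pushoutToG (PushoutI.of true (of i))) = PushoutI.of true (of i)
    rw [pushoutToG_of_true, hPToG, rename_of, gToPushout_of, pushoutGen_hP]

/-- The amalgamated free product `H_P ∗_{H_E} H_M`, where the maps `H_E → H_P` and
`H_E → H_M` send the generators `a`, `c` of `H_E` to the generators named `a`, `c`
of `H_P` and of `H_M`, has the presentation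
`⟨a,b,c,d | a² = c² = d³ = (ac)² = adad⁻¹ = abab⁻¹ = 1, cbc = ab, d = cd²c⟩`. -/
theorem stmt6 :
    ∃ φ : ∀ b : Bool, PresentedGroup relsHE →* vertexGroup b,
      φ true (PresentedGroup.of 0) = (PresentedGroup.of 0 : PresentedGroup relsHP) ∧
      φ true (PresentedGroup.of 1) = (PresentedGroup.of 2 : PresentedGroup relsHP) ∧
      φ false (PresentedGroup.of 0) = (PresentedGroup.of 1 : PresentedGroup relsHM) ∧
      φ false (PresentedGroup.of 1) = (PresentedGroup.of 2 : PresentedGroup relsHM) ∧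
      Nonempty (PresentedGroup relsG ≃* Monoid.PushoutI φ) :=
  ⟨edgeInclusion, edgeInclusion_true_of 0, edgeInclusion_true_of 1, edgeInclusion_false_of 0,
    edgeInclusion_false_of 1,
    ⟨gToPushout.toMulEquiv pushoutToG pushoutToG_comp_gToPushout gToPushout_comp_pushoutToG⟩⟩
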